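/- Let d ≥ 1 and let σ be a real polynomial of degree p ≥ 1. For every multi-index T = (t_1, …, t_d) ∈ ℕ^d with |T| ≤ p there exists a polynomial function P_T : ℝ^d × ℝ → ℝ such that for all ε ∈ (0, 1], all w̄ ∈ ℝ^d and all b̄ ∈ ℝ, | φ̂_{√ε w̄, √ε b̄}(T) − ε^{|T|/2} · (σ^{(|T|)}(0) / √(t_1! ⋯ t_d!)) · w̄_1^{t_1} ⋯ w̄_d^{t_d} | ≤ ε^{(|T|+1)/2} P_T(w̄, b̄), where σ^{(m)} denotes the m-th derivative of σ. -/

import Mathlib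

open MeasureTheory ProbabilityTheory

/-- The standard Gaussian measure `N(0, I_d)` on `ℝ^d`. -/
noncomputable def gaussD (d : ℕ) : Measure (Fin d → ℝ) :=
  Measure.pi fun _ => gaussianReal 0 1

/-- The normalized (probabilists') Hermite polynomial `H_t = He_t / √(t!)` evaluated at `y`. -/
noncomputable def hermN (t : ℕ) (y : ℝ) : ℝ :=
  (Polynomial.aeval y (Polynomial.hermite t)) / Real.sqrt (Nat.factorial t)

/-- The multivariate Hermite polynomial `χ_T(x) = ∏ i, H_{T i}(x i)`. -/
noncomputable def chiH {d : ℕ} (T : Fin d → ℕ) (x : Fin d → ℝ) : ℝ :=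
  ∏ i, hermN (T i) (x i)

/-- The Hermite coefficient `φ̂_{w,b}(T) = ∫ σ(⟨w,x⟩ + b) χ_T(x) dγ_d(x)`
of the random feature `φ_{w,b}(x) = σ(⟨w,x⟩ + b)`. -/
noncomputable def phiHat (d : ℕ) (σ : ℝ → ℝ) (w : Fin d → ℝ) (b : ℝ)
    (T : Fin d → ℕ) : ℝ :=
  ∫ x, σ (∑ i, w i * x i + b) * chiH T x ∂(gaussD d)

open Polynomial Real


noncomputable def Hp (t : ℕ) : Polynomial ℝ := (Polynomial.hermite t).map (Int.castRingHom ℝ)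

lemma Hp_succ (t : ℕ) : Hp (t+1) = X * Hp t - derivative (Hp t) := by
  unfold Hp
  rw [hermite_succ, Polynomial.map_sub, Polynomial.map_mul, Polynomial.map_X, derivative_map]

lemma Hp_zero : Hp 0 = 1 := by simp [Hp, hermite_zero]

lemma aeval_hermite_eq (t : ℕ) (y : ℝ) :
    (Polynomial.aeval y (Polynomial.hermite t)) = eval y (Hp t) := by
  rw [Hp, eval_map, aeval_def, algebraMap_int_eq]

lemma integrable_pow_mul_gauss (n : ℕ) :
    Integrable (fun x : ℝ => x ^ n * Real.exp (-x^2/2)) := by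
  have hb : (0:ℝ) < 1/4 := by norm_num
  set C : ℝ := 1 + n.factorial * 4 ^ n with hC
  apply Integrable.mono' ((integrable_exp_neg_mul_sq hb).const_mul C)
  · exact ((measurable_id.pow_const n).mul
      (((measurable_id.pow_const 2).neg.div_const 2).exp)).aestronglyMeasurable
  · filter_upwards with x
    have h1 : |x| ^ n ≤ 1 + (x^2) ^ n := by
      rcases le_or_gt (|x|) 1 with h | h
      · have h4 : |x| ^ n ≤ 1 := pow_le_one₀ (abs_nonneg x) h
        have h5 : (0:ℝ) ≤ (x^2)^n := by positivity
        linarith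
      · have h4 : |x| ^ n ≤ (x^2) ^ n := by
          calc |x| ^ n ≤ (|x| ^ 2) ^ n := by
                rw [← pow_mul]
                apply pow_le_pow_right₀ h.le; omega
            _ = (x^2)^n := by rw [sq_abs]
        linarith
    have h2 : (x^2) ^ n ≤ n.factorial * 4^n * Real.exp (x^2/4) := by
      have h6 := Real.pow_div_factorial_le_exp (x^2/4) (by positivity) n
      rw [div_pow] at h6
      have hf : (0:ℝ) < n.factorial := by positivity
      calc (x^2)^n = n.factorial * 4^n * ((x^2)^n / (4:ℝ)^n / n.factorial) := by
            field_simp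
        _ ≤ n.factorial * 4^n * Real.exp (x^2/4) := by
            apply mul_le_mul_of_nonneg_left h6 (by positivity)
    have key : |x| ^ n ≤ C * Real.exp (x^2/4) := by
      have h3 : (1:ℝ) ≤ Real.exp (x^2/4) := by
        rw [Real.one_le_exp_iff]; positivity
      calc |x|^n ≤ 1 + (x^2)^n := h1
        _ ≤ 1 * Real.exp (x^2/4) + n.factorial * 4^n * Real.exp (x^2/4) := by
            rw [one_mul]
            exact add_le_add h3 h2
        _ = C * Real.exp (x^2/4) := by rw [hC]; ring
    rw [norm_mul, norm_pow, Real.norm_eq_abs, Real.norm_eq_abs,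
      abs_of_nonneg (Real.exp_pos _).le]
    calc |x|^n * Real.exp (-x^2/2) ≤ C * Real.exp (x^2/4) * Real.exp (-x^2/2) :=
          mul_le_mul_of_nonneg_right key (Real.exp_pos _).le
      _ = C * Real.exp (-(1/4) * x^2) := by
          rw [mul_assoc, ← Real.exp_add]; ring_nf

lemma integrable_polyExp (q : Polynomial ℝ) :
    Integrable (fun x : ℝ => eval x q * Real.exp (-x^2/2)) := by
  induction q using Polynomial.induction_on' with
  | add p q hp hq => simpa [add_mul, Pi.add_def] using hp.add hq
  | monomial n a =>
      simpa [eval_monomial, mul_assoc] using (integrable_pow_mul_gauss n).const_mul a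
open scoped NNReal ENNReal

lemma gaussianPDFReal_std (x : ℝ) :
    gaussianPDFReal 0 1 x = (Real.sqrt (2 * π))⁻¹ * Real.exp (-x^2/2) := by
  simp [gaussianPDFReal]

lemma integral_gauss_eq (g : ℝ → ℝ) :
    ∫ x, g x ∂(gaussianReal 0 1)
      = (Real.sqrt (2 * π))⁻¹ * ∫ x, g x * Real.exp (-x^2/2) := by
  rw [gaussianReal_of_var_ne_zero 0 one_ne_zero]
  have hpdf : gaussianPDF 0 1 = fun x => ((Real.toNNReal (gaussianPDFReal 0 1 x) : ℝ≥0) : ℝ≥0∞) := by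
    funext x; rfl
  rw [hpdf, integral_withDensity_eq_integral_smul
    ((measurable_gaussianPDFReal 0 1).real_toNNReal) g]
  rw [← integral_const_mul]
  congr 1; funext x
  rw [NNReal.smul_def, Real.coe_toNNReal _ (gaussianPDFReal_nonneg 0 1 x)]
  rw [smul_eq_mul, gaussianPDFReal_std]
  ring

lemma integrable_poly_hermN_gauss (q : Polynomial ℝ) :
    Integrable (fun x : ℝ => eval x q) (gaussianReal 0 1) := by
  rw [gaussianReal_of_var_ne_zero 0 one_ne_zero]
  rw [integrable_withDensity_iff (measurable_gaussianPDF 0 1)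
    (Filter.Eventually.of_forall fun x => ENNReal.ofReal_lt_top)]
  have : (fun x : ℝ => eval x q * (gaussianPDF 0 1 x).toReal)
      = fun x => (Real.sqrt (2*π))⁻¹ * (eval x q * Real.exp (-x^2/2)) := by
    funext x
    rw [gaussianPDF, ENNReal.toReal_ofReal (gaussianPDFReal_nonneg 0 1 x), gaussianPDFReal_std]
    ring
  rw [this]
  exact (integrable_polyExp q).const_mul _
lemma herm_step (t : ℕ) (q : Polynomial ℝ) :
    ∫ x, eval x q * eval x (Hp (t+1)) ∂(gaussianReal 0 1)
      = ∫ x, eval x (derivative q) * eval x (Hp t) ∂(gaussianReal 0 1) := by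
  rw [integral_gauss_eq, integral_gauss_eq]
  congr 1
  set u : ℝ → ℝ := fun x => eval x q with hu_def
  set u' : ℝ → ℝ := fun x => eval x (derivative q) with hu'_def
  set v : ℝ → ℝ := fun x => eval x (Hp t) * Real.exp (-x^2/2) with hv_def
  set v' : ℝ → ℝ := fun x => -(eval x (Hp (t+1)) * Real.exp (-x^2/2)) with hv'_def
  have hu : ∀ x, HasDerivAt u (u' x) x := fun x => q.hasDerivAt x
  have hexp : ∀ x : ℝ, HasDerivAt (fun y : ℝ => Real.exp (-y^2/2))
      (-x * Real.exp (-x^2/2)) x := by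
    intro x
    have h0 : HasDerivAt (fun y : ℝ => -y^2/2) (-x) x := by
      have := ((hasDerivAt_pow 2 x).neg.div_const 2)
      simpa using this.congr_deriv (by push_cast; ring)
    simpa [mul_comm] using h0.exp
  have hv : ∀ x, HasDerivAt v (v' x) x := by
    intro x
    have := ((Hp t).hasDerivAt x).mul (hexp x)
    refine this.congr_deriv ?_
    rw [hv'_def, Hp_succ]
    simp only [eval_sub, eval_mul, eval_X]
    ring
  have huv' : Integrable (u * v') := by
    have he : (u * v') = fun x => -(eval x (q * Hp (t+1)) * Real.exp (-x^2/2)) := by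
      funext x; simp only [Pi.mul_apply, hu_def, hv'_def, eval_mul]; ring
    rw [he]; exact (integrable_polyExp _).neg
  have hu'v : Integrable (u' * v) := by
    have he : (u' * v) = fun x => eval x (derivative q * Hp t) * Real.exp (-x^2/2) := by
      funext x; simp only [Pi.mul_apply, hu'_def, hv_def, eval_mul]; ring
    rw [he]; exact integrable_polyExp _
  have huv : Integrable (u * v) := by
    have he : (u * v) = fun x => eval x (q * Hp t) * Real.exp (-x^2/2) := by
      funext x; simp only [Pi.mul_apply, hu_def, hv_def, eval_mul]; ring
    rw [he]; exact integrable_polyExp _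
  have key := integral_mul_deriv_eq_deriv_mul_of_integrable (fun x _ => hu x) (fun x _ => hv x) huv' hu'v huv
  have L : ∫ x, eval x q * eval x (Hp (t+1)) * Real.exp (-x^2/2)
      = - ∫ (x : ℝ), u x * v' x := by
    rw [← integral_neg]
    congr 1; funext x; simp only [hu_def, hv'_def]; ring
  rw [L, key, neg_neg]
  congr 1; funext x; simp only [hu'_def, hv_def]; ring

lemma herm_iter (t : ℕ) : ∀ q : Polynomial ℝ,
    ∫ x, eval x q * eval x (Hp t) ∂(gaussianReal 0 1)
      = ∫ x, eval x (derivative^[t] q) ∂(gaussianReal 0 1) := by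
  induction t with
  | zero => intro q; simp [Hp_zero]
  | succ t ih =>
      intro q
      rw [herm_step t q, ih (derivative q), ← Function.iterate_succ_apply]

lemma hermN_eq (t : ℕ) (y : ℝ) :
    hermN t y = eval y (Hp t) / Real.sqrt (Nat.factorial t) := by
  rw [hermN, aeval_hermite_eq]

noncomputable def Jint (a t : ℕ) : ℝ := ∫ x, x^a * hermN t x ∂(gaussianReal 0 1)

lemma Jint_eq (a t : ℕ) :
    Jint a t = (∫ x, eval x (derivative^[t] ((X : Polynomial ℝ)^a)) ∂(gaussianReal 0 1))
      / Real.sqrt (Nat.factorial t) := by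
  unfold Jint
  rw [← herm_iter t]
  rw [div_eq_mul_inv, ← integral_mul_const]
  congr 1; funext x
  rw [hermN_eq]
  simp only [eval_pow, eval_X]
  ring

lemma Jint_lt {a t : ℕ} (h : a < t) : Jint a t = 0 := by
  rw [Jint_eq]
  rw [Polynomial.iterate_derivative_eq_zero (by simpa [natDegree_X_pow] using h)]
  simp

lemma Jint_self (t : ℕ) : Jint t t = Real.sqrt (Nat.factorial t) := by
  rw [Jint_eq]
  rw [Polynomial.iterate_derivative_X_pow_eq_natCast_mul]
  simp only [Nat.descFactorial_self, Nat.sub_self, pow_zero, mul_one, eval_natCast]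
  rw [integral_const]
  simp only [measure_univ, ENNReal.toReal_one, probReal_univ, smul_eq_mul, one_mul]
  have h1 : (0:ℝ) ≤ (Nat.factorial t : ℝ) := by positivity
  have h2 : Real.sqrt (Nat.factorial t) ≠ 0 := by
    simp [Real.sqrt_eq_zero', Nat.factorial_pos t]
    positivity
  rw [Real.div_sqrt]
lemma gaussD_prod_integral {d : ℕ} (f : Fin d → ℝ → ℝ) :
    ∫ x, ∏ i, f i (x i) ∂(gaussD d) = ∏ i, ∫ x, f i x ∂(gaussianReal 0 1) := by
  letI : MeasureSpace ℝ := ⟨gaussianReal 0 1⟩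
  haveI : SigmaFinite (volume : Measure ℝ) := inferInstanceAs (SigmaFinite (gaussianReal 0 1))
  exact MeasureTheory.integral_fintype_prod_eq_prod (fun i => f i) (μ := fun _ => gaussianReal 0 1)

lemma gaussD_prod_integrable {d : ℕ} (f : Fin d → ℝ → ℝ)
    (hf : ∀ i, Integrable (f i) (gaussianReal 0 1)) :
    Integrable (fun x : Fin d → ℝ => ∏ i, f i (x i)) (gaussD d) := by
  letI : MeasureSpace ℝ := ⟨gaussianReal 0 1⟩
  haveI : SigmaFinite (volume : Measure ℝ) := inferInstanceAs (SigmaFinite (gaussianReal 0 1))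
  exact Integrable.fintype_prod (f := f) hf

lemma integrable_1d (q : Polynomial ℝ) (t : ℕ) :
    Integrable (fun y => eval y q * hermN t y) (gaussianReal 0 1) := by
  apply (integrable_poly_hermN_gauss
    (q * (C (Real.sqrt (Nat.factorial t))⁻¹ * Hp t))).congr
  apply Filter.Eventually.of_forall
  intro y
  simp only [eval_mul, eval_C, hermN_eq]
  ring

noncomputable def Mk (d : ℕ) (T : Fin d → ℕ) (k : ℕ) : MvPolynomial (Sum (Fin d) Unit) ℝ :=
  ∑ a ∈ Finset.piAntidiag Finset.univ k,
    MvPolynomial.C ((Nat.multinomial Finset.univ a : ℝ) * ∏ i, Jint (a (Sum.inl i)) (T i)) *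
      ∏ j, MvPolynomial.X j ^ a j

section MV
variable {d : ℕ} (T : Fin d → ℕ)

lemma sum_pow_expand (w : Fin d → ℝ) (b : ℝ) (k : ℕ) (x : Fin d → ℝ) :
    (∑ i, w i * x i + b)^k
      = ∑ a ∈ Finset.piAntidiag (Finset.univ : Finset (Sum (Fin d) Unit)) k,
          (Nat.multinomial Finset.univ a : ℝ) *
            ((∏ i, (w i * x i)^(a (Sum.inl i))) * b ^ (a (Sum.inr ()))) := by
  have h : (∑ i, w i * x i + b)
      = ∑ j : Sum (Fin d) Unit, Sum.elim (fun i => w i * x i) (fun _ => b) j := by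
    rw [Fintype.sum_sum_type]; simp
  rw [h, Finset.sum_pow_eq_sum_piAntidiag]
  refine Finset.sum_congr rfl fun a _ => ?_
  rw [Fintype.prod_sum_type]
  simp

lemma term_integrable (w : Fin d → ℝ) (a : Sum (Fin d) Unit → ℕ) :
    Integrable (fun x : Fin d → ℝ =>
      (∏ i, (w i * x i)^(a (Sum.inl i))) * chiH T x) (gaussD d) := by
  have he : (fun x : Fin d → ℝ => (∏ i, (w i * x i)^(a (Sum.inl i))) * chiH T x)
      = fun x => ∏ i, ((w i * x i)^(a (Sum.inl i)) * hermN (T i) (x i)) := by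
    funext x
    rw [chiH, ← Finset.prod_mul_distrib]
  rw [he]
  apply gaussD_prod_integrable (f := fun i y => (w i * y)^(a (Sum.inl i)) * hermN (T i) y)
  intro i
  have := integrable_1d ((C (w i) * X)^(a (Sum.inl i))) (T i)
  apply this.congr
  apply Filter.Eventually.of_forall
  intro y
  simp

lemma term_integral (w : Fin d → ℝ) (a : Sum (Fin d) Unit → ℕ) :
    ∫ x, (∏ i, (w i * x i)^(a (Sum.inl i))) * chiH T x ∂(gaussD d)
      = ∏ i, ((w i)^(a (Sum.inl i)) * Jint (a (Sum.inl i)) (T i)) := by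
  have he : (fun x : Fin d → ℝ => (∏ i, (w i * x i)^(a (Sum.inl i))) * chiH T x)
      = fun x => ∏ i, ((w i * x i)^(a (Sum.inl i)) * hermN (T i) (x i)) := by
    funext x
    rw [chiH, ← Finset.prod_mul_distrib]
  rw [he, gaussD_prod_integral (fun i y => (w i * y)^(a (Sum.inl i)) * hermN (T i) y)]
  refine Finset.prod_congr rfl fun i _ => ?_
  rw [Jint, ← integral_const_mul]
  congr 1; funext y
  rw [mul_pow]; ring

lemma pow_chi_integral (w : Fin d → ℝ) (b : ℝ) (k : ℕ) :
    ∫ x, (∑ i, w i * x i + b)^k * chiH T x ∂(gaussD d)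
      = MvPolynomial.eval (Sum.elim w fun _ => b) (Mk d T k) := by
  have he : (fun x : Fin d → ℝ => (∑ i, w i * x i + b)^k * chiH T x)
      = fun x => ∑ a ∈ Finset.piAntidiag (Finset.univ : Finset (Sum (Fin d) Unit)) k,
          ((Nat.multinomial Finset.univ a : ℝ) * b ^ (a (Sum.inr ()))) *
            ((∏ i, (w i * x i)^(a (Sum.inl i))) * chiH T x) := by
    funext x
    rw [sum_pow_expand, Finset.sum_mul]
    refine Finset.sum_congr rfl fun a _ => ?_
    ring
  rw [he, integral_finset_sum _ (fun a _ => ((term_integrable T w a).const_mul _))]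
  rw [Mk, map_sum]
  refine Finset.sum_congr rfl fun a _ => ?_
  rw [integral_const_mul, term_integral]
  rw [MvPolynomial.eval_mul, MvPolynomial.eval_C, MvPolynomial.eval_prod]
  simp only [MvPolynomial.eval_pow, MvPolynomial.eval_X]
  rw [Fintype.prod_sum_type]
  simp only [Sum.elim_inl, Sum.elim_inr]
  rw [Finset.prod_mul_distrib]
  simp [mul_comm, mul_assoc, mul_left_comm]

lemma pow_chi_integrable (w : Fin d → ℝ) (b : ℝ) (k : ℕ) :
    Integrable (fun x : Fin d → ℝ => (∑ i, w i * x i + b)^k * chiH T x) (gaussD d) := by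
  have he : (fun x : Fin d → ℝ => (∑ i, w i * x i + b)^k * chiH T x)
      = fun x => ∑ a ∈ Finset.piAntidiag (Finset.univ : Finset (Sum (Fin d) Unit)) k,
          ((Nat.multinomial Finset.univ a : ℝ) * b ^ (a (Sum.inr ()))) *
            ((∏ i, (w i * x i)^(a (Sum.inl i))) * chiH T x) := by
    funext x
    rw [sum_pow_expand, Finset.sum_mul]
    refine Finset.sum_congr rfl fun a _ => ?_
    ring
  rw [he]
  exact integrable_finset_sum _ (fun a _ => ((term_integrable T w a).const_mul _))

end MV
lemma prod_sqrt {ι : Type*} (s : Finset ι) (f : ι → ℝ) (hf : ∀ i ∈ s, 0 ≤ f i) :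
    ∏ i ∈ s, Real.sqrt (f i) = Real.sqrt (∏ i ∈ s, f i) := by
  induction s using Finset.cons_induction with
  | empty => simp
  | cons a s ha ih =>
      rw [Finset.prod_cons, Finset.prod_cons,
        ih (fun i hi => hf i (Finset.mem_cons_of_mem hi)),
        Real.sqrt_mul (hf a (Finset.mem_cons_self a s))]

section MV2
variable {d : ℕ} (T : Fin d → ℕ)

lemma Mk_eval_lt (k : ℕ) (h : k < ∑ i, T i) (z : Sum (Fin d) Unit → ℝ) :
    MvPolynomial.eval z (Mk d T k) = 0 := by
  rw [Mk, map_sum]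
  apply Finset.sum_eq_zero
  intro a ha
  rw [Finset.mem_piAntidiag] at ha
  obtain ⟨hsum, -⟩ := ha
  have hex : ∃ i, a (Sum.inl i) < T i := by
    by_contra hc
    push_neg at hc
    have h1 : (∑ i, T i) ≤ ∑ i, a (Sum.inl i) := Finset.sum_le_sum (fun i _ => hc i)
    have h2 : ∑ j : Sum (Fin d) Unit, a j
        = ∑ i, a (Sum.inl i) + ∑ u : Unit, a (Sum.inr u) := Fintype.sum_sum_type a
    have hsum' : ∑ j : Sum (Fin d) Unit, a j = k := hsum
    omega
  obtain ⟨i, hi⟩ := hex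
  have hz : ∏ i, Jint (a (Sum.inl i)) (T i) = 0 :=
    Finset.prod_eq_zero (Finset.mem_univ i) (Jint_lt hi)
  simp [hz]

lemma Mk_eval_main (w : Fin d → ℝ) (b : ℝ) :
    MvPolynomial.eval (Sum.elim w fun _ => b) (Mk d T (∑ i, T i))
      = (Nat.factorial (∑ i, T i) : ℝ) / Real.sqrt (∏ i, Nat.factorial (T i))
          * ∏ i, w i ^ T i := by
  classical
  set n := ∑ i, T i with hn
  set T' : Sum (Fin d) Unit → ℕ := Sum.elim T 0 with hT'
  rw [Mk, map_sum]
  have hmem : T' ∈ Finset.piAntidiag (Finset.univ : Finset (Sum (Fin d) Unit)) n := by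
    rw [Finset.mem_piAntidiag]
    constructor
    · rw [Fintype.sum_sum_type]; simp [hT', hn]
    · intro j _; exact Finset.mem_univ j
  have hvan : ∀ a ∈ Finset.piAntidiag (Finset.univ : Finset (Sum (Fin d) Unit)) n, a ≠ T' →
      (MvPolynomial.eval (Sum.elim w fun _ => b))
        (MvPolynomial.C ((Nat.multinomial Finset.univ a : ℝ) * ∏ i, Jint (a (Sum.inl i)) (T i)) *
          ∏ j, MvPolynomial.X j ^ a j) = 0 := by
    intro a ha hne
    rw [Finset.mem_piAntidiag] at ha
    obtain ⟨hsum, -⟩ := ha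
    have hsum' : ∑ j : Sum (Fin d) Unit, a j = n := hsum
    have h2 : ∑ j : Sum (Fin d) Unit, a j
        = ∑ i, a (Sum.inl i) + ∑ u : Unit, a (Sum.inr u) := Fintype.sum_sum_type a
    have hex : ∃ i, a (Sum.inl i) < T i := by
      by_contra hc
      push_neg at hc
      have h1 : (∑ i, T i) ≤ ∑ i, a (Sum.inl i) := Finset.sum_le_sum (fun i _ => hc i)
      have heq : ∑ i, a (Sum.inl i) = ∑ i, T i := le_antisymm (by omega) h1
      have hall : ∀ i ∈ Finset.univ, a (Sum.inl i) = T i := by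
        intro i hi
        exact ((Finset.sum_eq_sum_iff_of_le (fun i _ => hc i)).1 heq.symm i hi).symm
      have hz0 : a (Sum.inr ()) = 0 := by
        have h3 : ∑ u : Unit, a (Sum.inr u) = a (Sum.inr ()) := by simp
        omega
      apply hne
      funext j
      cases j with
      | inl i => exact hall i (Finset.mem_univ i)
      | inr u => cases u; exact hz0
    obtain ⟨i, hi⟩ := hex
    have hz : ∏ i, Jint (a (Sum.inl i)) (T i) = 0 :=
      Finset.prod_eq_zero (Finset.mem_univ i) (Jint_lt hi)
    simp [hz]
  rw [Finset.sum_eq_single_of_mem T' hmem hvan]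
  have hprodJ : ∏ i, Jint (T' (Sum.inl i)) (T i) = Real.sqrt (∏ i, (Nat.factorial (T i) : ℝ)) := by
    have h4 : ∀ i, Jint (T' (Sum.inl i)) (T i) = Real.sqrt (Nat.factorial (T i)) := by
      intro i; exact Jint_self (T i)
    rw [Finset.prod_congr rfl (fun i _ => h4 i)]
    rw [prod_sqrt _ _ (fun i _ => by positivity)]
  have hPc : ((∏ i, Nat.factorial (T i) : ℕ) : ℝ) = ∏ i, (Nat.factorial (T i) : ℝ) := by
    push_cast; ring
  have hmult : (Nat.multinomial Finset.univ T' : ℝ)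
      = (Nat.factorial n : ℝ) / (∏ i, (Nat.factorial (T i) : ℝ)) := by
    have hspec := Nat.multinomial_spec (Finset.univ : Finset (Sum (Fin d) Unit)) T'
    have hsum2 : ∑ j : Sum (Fin d) Unit, T' j = n := by
      rw [Fintype.sum_sum_type]; simp [hT', hn]
    have hprod : ∏ j : Sum (Fin d) Unit, Nat.factorial (T' j) = ∏ i, Nat.factorial (T i) := by
      rw [Fintype.prod_sum_type]; simp [hT']
    rw [hsum2, hprod] at hspec
    have hpos : (0:ℝ) < ∏ i, (Nat.factorial (T i) : ℝ) := by positivity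
    rw [eq_div_iff (ne_of_gt hpos), ← hPc, mul_comm]
    exact_mod_cast congrArg (Nat.cast (R := ℝ)) hspec
  rw [MvPolynomial.eval_mul, MvPolynomial.eval_C, MvPolynomial.eval_prod]
  simp only [MvPolynomial.eval_pow, MvPolynomial.eval_X]
  rw [Fintype.prod_sum_type]
  simp only [Sum.elim_inl, Sum.elim_inr]
  have hb : ∏ u : Unit, b ^ (T' (Sum.inr u)) = 1 := by simp [hT']
  have hw : ∏ i, (w i) ^ (T' (Sum.inl i)) = ∏ i, w i ^ T i := by
    refine Finset.prod_congr rfl fun i _ => rfl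
  rw [hb, hw, hprodJ, hmult, mul_one]
  have hP : (0:ℝ) ≤ ∏ i, (Nat.factorial (T i) : ℝ) := by positivity
  set S := Real.sqrt (∏ i, (Nat.factorial (T i) : ℝ)) with hS
  have hSpos : 0 < S := by
    rw [hS, Real.sqrt_pos]; positivity
  have hQ : (∏ i, (Nat.factorial (T i):ℝ)) = S * S := (Real.mul_self_sqrt hP).symm
  rw [hQ]
  field_simp

end MV2

set_option maxHeartbeats 2000000 in
/-- for a real polynomial `σ` of degree `p ≥ 1` and any multi-index `T` with
`|T| ≤ p`, there is a polynomial function `P_T(w̄, b̄)` such that for all `ε ∈ (0,1]`,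
`w̄ ∈ ℝ^d`, `b̄ ∈ ℝ`,
`|φ̂_{√ε w̄, √ε b̄}(T) − ε^{|T|/2} (σ^{(|T|)}(0)/√(t₁!⋯t_d!)) w̄₁^{t₁}⋯w̄_d^{t_d}|
  ≤ ε^{(|T|+1)/2} P_T(w̄, b̄)`. -/
theorem stmt6 (d p : ℕ) (hd : 1 ≤ d) (hp : 1 ≤ p)
    (σp : Polynomial ℝ) (hσ : σp.natDegree = p)
    (T : Fin d → ℕ) (hT : (∑ i, T i) ≤ p) :
    ∃ P : MvPolynomial (Sum (Fin d) Unit) ℝ,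
      ∀ ε : ℝ, 0 < ε → ε ≤ 1 → ∀ (wbar : Fin d → ℝ) (bbar : ℝ),
        |phiHat d (fun y => σp.eval y)
              (fun i => Real.sqrt ε * wbar i) (Real.sqrt ε * bbar) T
            - Real.sqrt ε ^ (∑ i, T i) *
                ((Polynomial.derivative^[∑ i, T i] σp).eval 0
                  / Real.sqrt (∏ i, Nat.factorial (T i))) *
                ∏ i, wbar i ^ T i|
          ≤ Real.sqrt ε ^ ((∑ i, T i) + 1) *
              MvPolynomial.eval (Sum.elim wbar (fun _ => bbar)) P := by
  classical
  set n := ∑ i, T i with hn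
  refine ⟨∑ k ∈ Finset.range (p+1),
    MvPolynomial.C |σp.coeff k| * (Mk d T k * Mk d T k + 1), ?_⟩
  intro ε hε hε1 wbar bbar
  set s := Real.sqrt ε with hs
  have hs0 : 0 < s := Real.sqrt_pos.2 hε
  have hs1 : s ≤ 1 := by rw [hs]; exact Real.sqrt_le_one.mpr hε1
  set z : Sum (Fin d) Unit → ℝ := Sum.elim wbar (fun _ => bbar) with hz
  have hdeg : σp.natDegree < p + 1 := by omega
  -- expansion of phiHat
  have hexp : phiHat d (fun y => σp.eval y) (fun i => s * wbar i) (s * bbar) T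
      = ∑ k ∈ Finset.range (p+1),
          σp.coeff k * s ^ k * MvPolynomial.eval z (Mk d T k) := by
    rw [phiHat]
    have hptw : ∀ x : Fin d → ℝ,
        σp.eval (∑ i, (s * wbar i) * x i + s * bbar) * chiH T x
        = ∑ k ∈ Finset.range (p+1), (σp.coeff k * s ^ k) *
            ((∑ i, wbar i * x i + bbar)^k * chiH T x) := by
      intro x
      have harg : ∑ i, (s * wbar i) * x i + s * bbar
          = s * (∑ i, wbar i * x i + bbar) := by
        rw [mul_add, Finset.mul_sum]
        congr 1
        exact Finset.sum_congr rfl fun i _ => by ring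
      rw [harg, Polynomial.eval_eq_sum_range' hdeg, Finset.sum_mul]
      refine Finset.sum_congr rfl fun k _ => ?_
      rw [mul_pow]
      ring
    have hint : ∫ x, σp.eval (∑ i, (s * wbar i) * x i + s * bbar) * chiH T x ∂(gaussD d)
        = ∫ x, (∑ k ∈ Finset.range (p+1), (σp.coeff k * s ^ k) *
            ((∑ i, wbar i * x i + bbar)^k * chiH T x)) ∂(gaussD d) := by
      congr 1; funext x; exact hptw x
    rw [hint, integral_finset_sum _
      (fun k _ => ((pow_chi_integrable T wbar bbar k).const_mul _))]
    refine Finset.sum_congr rfl fun k _ => ?_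
    rw [integral_const_mul, pow_chi_integral T wbar bbar k]
  have hnp : n ∈ Finset.range (p+1) := Finset.mem_range.2 (by omega)
  have hmain : s ^ n * ((Polynomial.derivative^[n] σp).eval 0
        / Real.sqrt (∏ i, Nat.factorial (T i))) * ∏ i, wbar i ^ T i
      = σp.coeff n * s ^ n * MvPolynomial.eval z (Mk d T n) := by
    rw [hz, Mk_eval_main]
    have hder : (Polynomial.derivative^[n] σp).eval 0
        = (Nat.factorial n : ℝ) * σp.coeff n := by
      rw [← Polynomial.coeff_zero_eq_eval_zero, Polynomial.coeff_iterate_derivative]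
      rw [Nat.zero_add, Nat.descFactorial_self, nsmul_eq_mul]
    rw [hder]
    ring
  rw [hexp, hmain]
  have hsplit : (∑ k ∈ Finset.range (p+1), σp.coeff k * s^k * MvPolynomial.eval z (Mk d T k))
      - σp.coeff n * s^n * MvPolynomial.eval z (Mk d T n)
      = ∑ k ∈ (Finset.range (p+1)).erase n,
          σp.coeff k * s^k * MvPolynomial.eval z (Mk d T k) := by
    rw [← Finset.sum_erase_add _ _ hnp]
    ring
  rw [hsplit]
  have hPeval : MvPolynomial.eval z (∑ k ∈ Finset.range (p+1),
        MvPolynomial.C |σp.coeff k| * (Mk d T k * Mk d T k + 1))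
      = ∑ k ∈ Finset.range (p+1),
          |σp.coeff k| * (MvPolynomial.eval z (Mk d T k) * MvPolynomial.eval z (Mk d T k) + 1) := by
    rw [map_sum]
    refine Finset.sum_congr rfl fun k _ => ?_
    simp [MvPolynomial.eval_mul, MvPolynomial.eval_add]
  rw [hPeval]
  have hterm : ∀ k ∈ (Finset.range (p+1)).erase n,
      |σp.coeff k * s^k * MvPolynomial.eval z (Mk d T k)|
        ≤ s^(n+1) * (|σp.coeff k| *
            (MvPolynomial.eval z (Mk d T k) * MvPolynomial.eval z (Mk d T k) + 1)) := by
    intro k hk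
    rw [Finset.mem_erase, Finset.mem_range] at hk
    obtain ⟨hkn, hkp⟩ := hk
    set e := MvPolynomial.eval z (Mk d T k) with he
    rcases lt_or_gt_of_ne hkn with hlt | hgt
    · have : e = 0 := by rw [he, Mk_eval_lt T k (by omega) z]
      rw [this]
      simp only [mul_zero, abs_zero]
      positivity
    · have h1 : |σp.coeff k * s^k * e| = |σp.coeff k| * (s^k * |e|) := by
        rw [abs_mul, abs_mul, abs_of_nonneg (le_of_lt (pow_pos hs0 k)), mul_assoc]
      have h2 : s^k ≤ s^(n+1) := pow_le_pow_of_le_one hs0.le hs1 (by omega)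
      have h3 : |e| ≤ e * e + 1 := by nlinarith [abs_nonneg e, sq_abs e, sq_nonneg (|e| - 1)]
      have h4 : s^k * |e| ≤ s^(n+1) * (e * e + 1) :=
        mul_le_mul h2 h3 (abs_nonneg e) (le_of_lt (pow_pos hs0 (n+1)))
      calc |σp.coeff k * s^k * e| = |σp.coeff k| * (s^k * |e|) := h1
        _ ≤ |σp.coeff k| * (s^(n+1) * (e * e + 1)) :=
            mul_le_mul_of_nonneg_left h4 (abs_nonneg _)
        _ = s^(n+1) * (|σp.coeff k| * (e * e + 1)) := by ring
  calc |∑ k ∈ (Finset.range (p+1)).erase n,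
          σp.coeff k * s^k * MvPolynomial.eval z (Mk d T k)|
      ≤ ∑ k ∈ (Finset.range (p+1)).erase n,
          |σp.coeff k * s^k * MvPolynomial.eval z (Mk d T k)| :=
        Finset.abs_sum_le_sum_abs _ _
    _ ≤ ∑ k ∈ (Finset.range (p+1)).erase n, s^(n+1) * (|σp.coeff k| *
          (MvPolynomial.eval z (Mk d T k) * MvPolynomial.eval z (Mk d T k) + 1)) :=
        Finset.sum_le_sum hterm
    _ ≤ ∑ k ∈ Finset.range (p+1), s^(n+1) * (|σp.coeff k| *
          (MvPolynomial.eval z (Mk d T k) * MvPolynomial.eval z (Mk d T k) + 1)) := by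
        apply Finset.sum_le_sum_of_subset_of_nonneg (Finset.erase_subset n _)
        intro k _ _
        have h5 : (0:ℝ) ≤ MvPolynomial.eval z (Mk d T k) * MvPolynomial.eval z (Mk d T k) :=
          mul_self_nonneg _
        positivity
    _ = s^(n+1) * ∑ k ∈ Finset.range (p+1), |σp.coeff k| *
          (MvPolynomial.eval z (Mk d T k) * MvPolynomial.eval z (Mk d T k) + 1) := by
        rw [Finset.mul_sum]
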